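/- Let (X,Fₙ,*) be a generalized fuzzy n-metric space. Then (X, τ_F) is a Hausdorff topological space, where τ_F is the topology generated by the open balls B_F(x,r,t) = {y ∈ X : Fₙ(x,y,y,…,y,t) > 1−r}. -/

import Mathlib

/-- A continuous t-norm on `[0,1] ⊆ ℝ`. -/
structure IsContTNorm (star : ℝ → ℝ → ℝ) : Prop where
  comm : ∀ a b, star a b = star b a
  assoc : ∀ a b c, star (star a b) c = star a (star b c)
  one : ∀ a, a ∈ Set.Icc (0:ℝ) 1 → star a 1 = a
  mono : ∀ a b c d, a ≤ c → b ≤ d → star a b ≤ star c d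
  maps : ∀ a b, a ∈ Set.Icc (0:ℝ) 1 → b ∈ Set.Icc (0:ℝ) 1 → star a b ∈ Set.Icc (0:ℝ) 1
  cont : Continuous fun p : ℝ × ℝ => star p.1 p.2

/-- A generalized fuzzy `n`-metric space structure (Khan), in the sense of
George and Veeramani: `star` is a continuous t-norm and `F` is a fuzzy set on
`Xⁿ × (0,∞)` satisfying axioms (M1)–(M6). -/
structure IsGenFuzzyNMetric {X : Type*} (n : ℕ) (hn : 3 ≤ n)
    (star : ℝ → ℝ → ℝ) (F : (Fin n → X) → ℝ → ℝ) : Prop where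
  /-- `F` takes values in `[0,1]` -/
  mem : ∀ (x : Fin n → X) (t : ℝ), 0 < t → F x t ∈ Set.Icc (0:ℝ) 1
  /-- (M1) `F(x₁,…,x₁,x₂,t) > 0` for `x₁ ≠ x₂` -/
  pos : ∀ (x y : X) (t : ℝ), 0 < t → x ≠ y →
    0 < F (fun i => if i.val = n - 1 then y else x) t
  /-- (M2) `F(x₁,…,x₁,x₂,t) ≥ F(x₁,…,xₙ,t)` when at least two of `x₂,…,xₙ` are distinct -/
  ge : ∀ (x : Fin n → X) (t : ℝ), 0 < t →
    (∃ i j : Fin n, i ≠ ⟨0, by omega⟩ ∧ j ≠ ⟨0, by omega⟩ ∧ x i ≠ x j) →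
    F x t ≤ F (fun i => if i.val = n - 1 then x ⟨1, by omega⟩ else x ⟨0, by omega⟩) t
  /-- (M3) `F(x₁,…,xₙ,t) = 1` iff all the points coincide -/
  eq_one_iff : ∀ (x : Fin n → X) (t : ℝ), 0 < t → (F x t = 1 ↔ ∀ i j, x i = x j)
  /-- (M4) permutation invariance -/
  perm : ∀ (x : Fin n → X) (σ : Equiv.Perm (Fin n)) (t : ℝ), 0 < t → F (x ∘ σ) t = F x t
  /-- (M5) `F(x₁,a,…,a,t) * F(a,x₂,…,xₙ,s) ≤ F(x₁,…,xₙ,t+s)` -/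
  tri : ∀ (x : Fin n → X) (a : X) (t s : ℝ), 0 < t → 0 < s →
    star (F (fun i => if i.val = 0 then x ⟨0, by omega⟩ else a) t)
         (F (Function.update x ⟨0, by omega⟩ a) s) ≤ F x (t + s)
  /-- (M6) continuity in `t` on `(0,∞)` -/
  cont : ∀ x : Fin n → X, ContinuousOn (F x) (Set.Ioi 0)

/-!
For `x ≠ y` put `c = max (F(x,y,…,y,1), F(y,x,…,x,1)) < 1`. By (M2) and (M4), axiom (M5) yields
the triangle inequality `F(y,z,…,z,t) * F(x,z,…,z,s) ≤ F(x,y,…,y,t+s)` for `z ≠ x`, and (M5)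
with `a = x₁` makes each `F v` monotone in `t`; together they bound `F(y,z,…,z,½) * F(x,z,…,z,½)` by `c`
for every `z`. Since `u ↦ u * u` is continuous with value `1 > c` at `1`, the balls of radius
`r` and parameter `½` around `x` and `y` are disjoint once `r` is small.
-/

open Set

theorem IsContTNorm.exists_forall_lt_star {star : ℝ → ℝ → ℝ} (hstar : IsContTNorm star)
    {c : ℝ} (hc : c < 1) :
    ∃ r, 0 < r ∧ r < 1 ∧ ∀ a b, 1 - r < a → 1 - r < b → c < star a b := by
  have hdiag : Continuous fun u : ℝ => star u u :=
    hstar.cont.comp (continuous_id.prodMk continuous_id)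
  have hone : star 1 1 = 1 := hstar.one 1 ⟨zero_le_one, le_rfl⟩
  have hnhds : ∀ᶠ u in nhds (1 : ℝ), c < star u u :=
    continuousAt_const.eventually_lt hdiag.continuousAt (by rwa [hone])
  obtain ⟨ε, hε, hball⟩ := Metric.eventually_nhds_iff.mp hnhds
  set r := min ε (1 / 2)
  have hr : 0 < r := by positivity
  have hrε : r ≤ ε := min_le_left _ _
  refine ⟨r, hr, by linarith [min_le_right ε (1 / 2 : ℝ)], fun a b ha hb => ?_⟩
  set m := min (min a b) 1
  have hm1 : m ≤ 1 := min_le_right _ _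
  have hm : 1 - r < m := lt_min (lt_min ha hb) (by linarith)
  calc c < star m m := hball (by rw [Real.dist_eq, abs_lt]; constructor <;> linarith)
    _ ≤ star a b := hstar.mono _ _ _ _ ((min_le_left _ _).trans (min_le_left _ _))
        ((min_le_left _ _).trans (min_le_right _ _))

section

variable {X : Type*} {n : ℕ} {hn : 3 ≤ n} {star : ℝ → ℝ → ℝ} {F : (Fin n → X) → ℝ → ℝ}

/-- `fuzzyPair F x y t` is the paper's `Fₙ(x,y,…,y,t)`. -/
def fuzzyPair (F : (Fin n → X) → ℝ → ℝ) (x y : X) (t : ℝ) : ℝ :=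
  F (fun i => if i.val = 0 then x else y) t

def fuzzyBall (F : (Fin n → X) → ℝ → ℝ) (x : X) (r t : ℝ) : Set X :=
  {y | 1 - r < fuzzyPair F x y t}

namespace IsGenFuzzyNMetric

theorem apply_const (hF : IsGenFuzzyNMetric n hn star F) (x : X) {t : ℝ} (ht : 0 < t) :
    F (fun _ => x) t = 1 :=
  (hF.eq_one_iff _ t ht).mpr fun _ _ => rfl

theorem fuzzyPair_self (hF : IsGenFuzzyNMetric n hn star F) (x : X) {t : ℝ} (ht : 0 < t) :
    fuzzyPair F x x t = 1 := by
  simpa [fuzzyPair] using hF.apply_const x ht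

theorem fuzzyPair_mem_Icc (hF : IsGenFuzzyNMetric n hn star F) (x y : X) {t : ℝ} (ht : 0 < t) :
    fuzzyPair F x y t ∈ Icc 0 1 :=
  hF.mem _ t ht

theorem fuzzyPair_lt_one (hF : IsGenFuzzyNMetric n hn star F) {x y : X} (hxy : x ≠ y)
    {t : ℝ} (ht : 0 < t) : fuzzyPair F x y t < 1 := by
  refine (hF.fuzzyPair_mem_Icc x y ht).2.lt_of_ne fun h => hxy ?_
  simpa using (hF.eq_one_iff _ t ht).mp h ⟨0, by omega⟩ ⟨1, by omega⟩

theorem apply_ite_eq_fuzzyPair (hF : IsGenFuzzyNMetric n hn star F) (x y : X) {k : ℕ}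
    (hk : k < n) {t : ℝ} (ht : 0 < t) :
    F (fun i => if i.val = k then x else y) t = fuzzyPair F x y t := by
  rw [fuzzyPair, ← hF.perm _ (Equiv.swap ⟨0, by omega⟩ ⟨k, hk⟩) t ht]
  congr 1
  funext i
  simp only [Function.comp_apply, Equiv.swap_apply_def, Fin.ext_iff]
  split_ifs <;> simp_all

theorem monotoneOn (hF : IsGenFuzzyNMetric n hn star F) (hstar : IsContTNorm star)
    (v : Fin n → X) : MonotoneOn (F v) (Ioi 0) := by
  intro s hs t hst hle
  rcases hle.eq_or_lt with rfl | hlt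
  · exact le_rfl
  have htri := hF.tri v (v ⟨0, by omega⟩) (t - s) s (sub_pos.mpr hlt) hs
  simp only [ite_self, Function.update_eq_self, sub_add_cancel] at htri
  rw [hF.apply_const _ (sub_pos.mpr hlt), hstar.comm] at htri
  rwa [hstar.one _ (hF.mem v s hs)] at htri

theorem star_fuzzyPair_le (hF : IsGenFuzzyNMetric n hn star F) {x y z : X} (hxz : x ≠ z)
    {t s : ℝ} (ht : 0 < t) (hs : 0 < s) :
    star (fuzzyPair F y z t) (fuzzyPair F x z s) ≤ fuzzyPair F x y (t + s) := by
  let v : Fin n → X := fun i => if i.val = 1 then x else z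
  let u := Function.update v ⟨0, by omega⟩ y
  have hu0 : u ⟨0, by omega⟩ = y := Function.update_self ..
  have hu1 : u ⟨1, by omega⟩ = x := by simp [u, v]
  have htri := hF.tri u z t s ht hs
  rw [hu0, Function.update_idem, Function.update_eq_self_iff.mpr (by simp [v]),
    hF.apply_ite_eq_fuzzyPair _ _ (by omega) hs] at htri
  have hge := hF.ge u (t + s) (by positivity)
    ⟨⟨1, by omega⟩, ⟨2, by omega⟩, by simp [Fin.ext_iff], by simp [Fin.ext_iff],
      by simpa [u, v] using hxz⟩
  rw [hu0, hu1, hF.apply_ite_eq_fuzzyPair _ _ (by omega) (by positivity)] at hge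
  exact htri.trans hge

theorem star_fuzzyPair_le_max (hF : IsGenFuzzyNMetric n hn star F) (hstar : IsContTNorm star)
    (x y z : X) {t s : ℝ} (ht : 0 < t) (hs : 0 < s) :
    star (fuzzyPair F y z t) (fuzzyPair F x z s) ≤
      max (fuzzyPair F x y (t + s)) (fuzzyPair F y x (t + s)) := by
  have hts : t < t + s := lt_add_of_pos_right t hs
  have hst : s < t + s := lt_add_of_pos_left s ht
  by_cases hxz : x = z
  · subst hxz
    rw [hF.fuzzyPair_self x hs, hstar.one _ (hF.fuzzyPair_mem_Icc y x ht)]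
    exact le_max_of_le_right (hF.monotoneOn hstar _ ht (ht.trans hts) hts.le)
  by_cases hyz : y = z
  · subst hyz
    rw [hF.fuzzyPair_self y ht, hstar.comm, hstar.one _ (hF.fuzzyPair_mem_Icc x y hs)]
    exact le_max_of_le_left (hF.monotoneOn hstar _ hs (hs.trans hst) hst.le)
  exact le_max_of_le_left (hF.star_fuzzyPair_le hxz ht hs)

theorem mem_fuzzyBall_self (hF : IsGenFuzzyNMetric n hn star F) (x : X) {r t : ℝ}
    (hr : 0 < r) (ht : 0 < t) : x ∈ fuzzyBall F x r t := by
  simp only [fuzzyBall, mem_ofPred_eq, hF.fuzzyPair_self x ht]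
  linarith

theorem exists_disjoint_fuzzyBall (hF : IsGenFuzzyNMetric n hn star F)
    (hstar : IsContTNorm star) {x y : X} (hxy : x ≠ y) :
    ∃ r, 0 < r ∧ r < 1 ∧ Disjoint (fuzzyBall F x r (1 / 2)) (fuzzyBall F y r (1 / 2)) := by
  obtain ⟨r, hr0, hr1, hr⟩ := hstar.exists_forall_lt_star
    (max_lt (hF.fuzzyPair_lt_one hxy one_pos) (hF.fuzzyPair_lt_one hxy.symm one_pos))
  refine ⟨r, hr0, hr1, disjoint_left.mpr fun z hzx hzy => ?_⟩
  have hle := hF.star_fuzzyPair_le_max hstar x y z one_half_pos one_half_pos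
  rw [add_halves] at hle
  exact (hr _ _ hzy hzx).not_ge hle

end IsGenFuzzyNMetric

end

/-- the topology `τ_F` of a generalized fuzzy `n`-metric space,
generated by the open balls `B_F(x,r,t) = {y : Fₙ(x,y,…,y,t) > 1−r}`, is Hausdorff. -/
theorem stmt8 {X : Type*} (n : ℕ) (hn : 3 ≤ n) (star : ℝ → ℝ → ℝ)
    (F : (Fin n → X) → ℝ → ℝ)
    (hstar : IsContTNorm star) (hF : IsGenFuzzyNMetric n hn star F) :
    @T2Space X (TopologicalSpace.generateFrom
      {A : Set X | ∃ (x : X) (r t : ℝ), 0 < r ∧ r < 1 ∧ 0 < t ∧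
        A = {y : X | 1 - r < F (fun i => if i.val = 0 then x else y) t}}) := by
  refine @T2Space.mk _ (_) fun x y hxy => ?_
  obtain ⟨r, hr0, hr1, hdisj⟩ := hF.exists_disjoint_fuzzyBall hstar hxy
  exact ⟨_, _, TopologicalSpace.isOpen_generateFrom_of_mem ⟨x, r, 1 / 2, hr0, hr1, one_half_pos, rfl⟩,
    TopologicalSpace.isOpen_generateFrom_of_mem ⟨y, r, 1 / 2, hr0, hr1, one_half_pos, rfl⟩,
    hF.mem_fuzzyBall_self x hr0 one_half_pos, hF.mem_fuzzyBall_self y hr0 one_half_pos, hdisj⟩
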